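/- (Convergence of PFASST in the stiff limit.) Assume Q_Δ, A, Q̃_Δ and Ã are invertible and (I_M − Q_Δ^{-1} Q)^M = 0 (LU-trick preconditioner). Then for every integer k ≥ M there exist constants c > 0 (depending on k) and μ* > 0 such that for all μ > μ*, the matrices P̂(μ) and P̃(μ) are invertible and the PFASST iteration matrix with k smoothing steps satisfies ρ( T_S(μ)^k · T_CGC(μ) ) ≤ c / μ. -/

import Mathlib

/-!
STATEMENT 13 (Convergence of PFASST in the stiff limit): Assume Q_Δ, A, Q̃_Δ and Ã
are invertible and (I_M − Q_Δ⁻¹ Q)^M = 0 (LU-trick preconditioner). Then for every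
integer k ≥ M there exist c > 0 and μ* > 0 such that for all μ > μ*, P̂(μ) and
P̃(μ) are invertible and ρ( T_S(μ)^k · T_CGC(μ) ) ≤ c / μ.
-/

noncomputable section

open Matrix
open scoped Kronecker

/-- Complexification of a real matrix. -/
def cmplx {m n : Type*} (A : Matrix m n ℝ) : Matrix m n ℂ := A.map (fun x => (x : ℂ))

/-- The matrix `E` with ones on the first subdiagonal and zeros elsewhere. -/
def Emat (L : ℕ) : Matrix (Fin L) (Fin L) ℂ :=
  Matrix.of fun i j => if (i : ℕ) = (j : ℕ) + 1 then 1 else 0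

/-- The matrix `N_M` whose last column consists of ones, all other entries zero. -/
def Nmat (M : ℕ) : Matrix (Fin M) (Fin M) ℂ :=
  Matrix.of fun _ j => if (j : ℕ) = M - 1 then 1 else 0

/-- `H = N_M ⊗ I_N`. -/
def Hmat (M N : ℕ) : Matrix (Fin M × Fin N) (Fin M × Fin N) ℂ :=
  Nmat M ⊗ₖ (1 : Matrix (Fin N) (Fin N) ℂ)

/-- `E ⊗ H`. -/
def EH (L M N : ℕ) : Matrix (Fin L × Fin M × Fin N) (Fin L × Fin M × Fin N) ℂ :=
  Emat L ⊗ₖ Hmat M N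

/-- The composite collocation matrix `C(μ) = I − μ (I_L ⊗ Q ⊗ A) − E ⊗ H`. -/
def Cmat (L : ℕ) {M N : ℕ} (Q : Matrix (Fin M) (Fin M) ℝ) (A : Matrix (Fin N) (Fin N) ℂ)
    (μ : ℝ) : Matrix (Fin L × Fin M × Fin N) (Fin L × Fin M × Fin N) ℂ :=
  1 - (μ : ℂ) • ((1 : Matrix (Fin L) (Fin L) ℂ) ⊗ₖ (cmplx Q ⊗ₖ A)) - EH L M N

/-- The approximative block Jacobi preconditioner `P̂(μ) = I − μ (I_L ⊗ Q_Δ ⊗ A)`. -/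
def Phat (L : ℕ) {M N : ℕ} (QΔ : Matrix (Fin M) (Fin M) ℝ) (A : Matrix (Fin N) (Fin N) ℂ)
    (μ : ℝ) : Matrix (Fin L × Fin M × Fin N) (Fin L × Fin M × Fin N) ℂ :=
  1 - (μ : ℂ) • ((1 : Matrix (Fin L) (Fin L) ℂ) ⊗ₖ (cmplx QΔ ⊗ₖ A))

/-- The smoother iteration matrix `T_S(μ) = I − P̂(μ)⁻¹ C(μ)`. -/
def Tsmooth (L : ℕ) {M N : ℕ} (Q QΔ : Matrix (Fin M) (Fin M) ℝ)
    (A : Matrix (Fin N) (Fin N) ℂ) (μ : ℝ) :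
    Matrix (Fin L × Fin M × Fin N) (Fin L × Fin M × Fin N) ℂ :=
  1 - (Phat L QΔ A μ)⁻¹ * Cmat L Q A μ

/-- Restriction operator `T_F^C = I_L ⊗ T_{F,Q}^C ⊗ T_{F,A}^C`. -/
def TFCmat (L : ℕ) {M N M' N' : ℕ} (TFQ : Matrix (Fin M') (Fin M) ℝ)
    (TFA : Matrix (Fin N') (Fin N) ℂ) :
    Matrix (Fin L × Fin M' × Fin N') (Fin L × Fin M × Fin N) ℂ :=
  (1 : Matrix (Fin L) (Fin L) ℂ) ⊗ₖ (cmplx TFQ ⊗ₖ TFA)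

/-- Interpolation operator `T_C^F = I_L ⊗ T_{C,Q}^F ⊗ T_{C,A}^F`. -/
def TCFmat (L : ℕ) {M N M' N' : ℕ} (TCQ : Matrix (Fin M) (Fin M') ℝ)
    (TCA : Matrix (Fin N) (Fin N') ℂ) :
    Matrix (Fin L × Fin M × Fin N) (Fin L × Fin M' × Fin N') ℂ :=
  (1 : Matrix (Fin L) (Fin L) ℂ) ⊗ₖ (cmplx TCQ ⊗ₖ TCA)

/-- The coarse approximative block Gauss-Seidel preconditioner
`P̃(μ) = I − μ (I_L ⊗ Q̃_Δ ⊗ Ã) − E ⊗ H̃`. -/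
def Ptilde (L : ℕ) {M' N' : ℕ} (QΔt : Matrix (Fin M') (Fin M') ℝ)
    (At : Matrix (Fin N') (Fin N') ℂ) (μ : ℝ) :
    Matrix (Fin L × Fin M' × Fin N') (Fin L × Fin M' × Fin N') ℂ :=
  1 - (μ : ℂ) • ((1 : Matrix (Fin L) (Fin L) ℂ) ⊗ₖ (cmplx QΔt ⊗ₖ At)) - EH L M' N'

/-- The coarse-grid correction iteration matrix
`T_CGC(μ) = I − T_C^F P̃(μ)⁻¹ T_F^C C(μ)`. -/
def Tcgc (L : ℕ) {M N M' N' : ℕ} (Q : Matrix (Fin M) (Fin M) ℝ)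
    (A : Matrix (Fin N) (Fin N) ℂ)
    (QΔt : Matrix (Fin M') (Fin M') ℝ) (At : Matrix (Fin N') (Fin N') ℂ)
    (TFQ : Matrix (Fin M') (Fin M) ℝ) (TFA : Matrix (Fin N') (Fin N) ℂ)
    (TCQ : Matrix (Fin M) (Fin M') ℝ) (TCA : Matrix (Fin N) (Fin N') ℂ) (μ : ℝ) :
    Matrix (Fin L × Fin M × Fin N) (Fin L × Fin M × Fin N) ℂ :=
  1 - TCFmat L TCQ TCA * (Ptilde L QΔt At μ)⁻¹ * TFCmat L TFQ TFA * Cmat L Q A μ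

/-!
With `B = I_L ⊗ Q_Δ ⊗ A` and `D = I_L ⊗ (I_M − Q_Δ⁻¹ Q) ⊗ I_N` one has `B D = B − I_L ⊗ Q ⊗ A`,
which turns the smoother into `T_S(μ) = D + P̂(μ)⁻¹ (E ⊗ H − D)`. For an invertible `b`,
`(a − μ b)⁻¹` is `(−b)⁻¹` times the resolvent of `a b⁻¹` at `μ`, hence `O(1/μ)`; so
`P̂(μ)⁻¹, P̃(μ)⁻¹ = O(1/μ)`. As `D ^ k = 0` for `k ≥ M`, this gives `T_S(μ) ^ k = O(1/μ)`, while
`C(μ) = O(μ)` keeps `T_CGC(μ)` bounded. Finally the spectral radius is at most any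
submultiplicative norm.
-/

open Filter Asymptotics Bornology Topology

lemma sub_smul_eq_mul_neg {S A : Type*} [CommRing S] [Ring A] [Algebra S A] {a b : A}
    (hb : IsUnit b) (z : S) :
    a - z • b = (algebraMap S A z - a * Ring.inverse b) * -b := by
  rw [sub_mul, mul_neg, mul_neg, Ring.inverse_mul_cancel_right _ _ hb,
    Algebra.algebraMap_eq_smul_one, smul_one_mul]
  abel

lemma one_sub_inverse_mul_eq {S R : Type*} [CommRing S] [Ring R] [Algebra S R] {b d x : R}
    (e : R) {z : S} (hp : IsUnit (1 - z • b)) (hd : b * d = b - x) :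
    1 - Ring.inverse (1 - z • b) * (1 - z • x - e) = d + Ring.inverse (1 - z • b) * (e - d) := by
  apply hp.mul_left_cancel
  rw [mul_sub, mul_one, mul_add, Ring.mul_inverse_cancel_left _ _ hp,
    Ring.mul_inverse_cancel_left _ _ hp, sub_mul, one_mul, smul_mul_assoc, hd, smul_sub]
  abel

theorem Asymptotics.IsBigO.pow_sub_pow {α 𝕜 R : Type*} [NormedField 𝕜] [NormedRing R]
    {l : Filter α} {f : α → R} {g : α → 𝕜} {d : R}
    (hg : (fun x => f x - d) =O[l] g) (hf : Tendsto f l (𝓝 d)) (n : ℕ) :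
    (fun x => f x ^ n - d ^ n) =O[l] g := by
  induction n with
  | zero => simpa using isBigO_zero g l
  | succ n ih =>
    have key : ∀ x, f x ^ (n + 1) - d ^ (n + 1) = (f x ^ n - d ^ n) * f x + d ^ n * (f x - d) :=
      fun x => by rw [pow_succ, pow_succ]; noncomm_ring
    simp_rw [key]
    have hfn : (fun x => (f x ^ n - d ^ n) * f x) =O[l] g := by
      simpa only [mul_one] using ih.mul (hf.isBigO_one 𝕜)
    exact hfn.add (hg.const_mul_left _)

theorem isBigO_sub_smul {𝕜 E : Type*} [NontriviallyNormedField 𝕜] [NormedAddCommGroup E]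
    [NormedSpace 𝕜 E] (a x : E) : (fun z : 𝕜 => a - z • x) =O[cobounded 𝕜] id :=
  (isLittleO_const_id_cobounded a).isBigO.sub <|
    isBigO_of_le' _ fun z => by rw [norm_smul, mul_comm]; rfl

section InverseSubSMul

variable {𝕜 A : Type*} [NontriviallyNormedField 𝕜] [NormedRing A] [NormedAlgebra 𝕜 A]
  [CompleteSpace A]

theorem eventually_isUnit_sub_smul {a b : A} (hb : IsUnit b) :
    ∀ᶠ z in cobounded 𝕜, IsUnit (a - z • b) := by
  filter_upwards [spectrum.eventually_isUnit_resolvent (a * Ring.inverse b)] with z hz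
  rw [sub_smul_eq_mul_neg hb]
  exact (isUnit_ringInverse.mp hz).mul hb.neg

theorem isBigO_inverse_sub_smul {a b : A} (hb : IsUnit b) :
    (fun z : 𝕜 => Ring.inverse (a - z • b)) =O[cobounded 𝕜] Inv.inv := by
  simp_rw [sub_smul_eq_mul_neg hb, Ring.inverse_mul (Or.inr hb.neg)]
  exact (spectrum.resolvent_isBigO_inv (a * Ring.inverse b)).const_mul_left _

theorem isBigO_pow_one_sub_inverse_mul {b d x : A} (e : A) {k : ℕ} (hb : IsUnit b)
    (hd : b * d = b - x) (hdk : d ^ k = 0) :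
    (fun z : 𝕜 => (1 - Ring.inverse (1 - z • b) * (1 - z • x - e)) ^ k)
      =O[cobounded 𝕜] Inv.inv := by
  set T := fun z : 𝕜 => 1 - Ring.inverse (1 - z • b) * (1 - z • x - e)
  have hT : (fun z => T z - d) =O[cobounded 𝕜] Inv.inv := by
    have hR : (fun z => Ring.inverse (1 - z • b) * (e - d)) =O[cobounded 𝕜] Inv.inv := by
      simpa only [mul_one] using
        (isBigO_inverse_sub_smul hb).mul (tendsto_const_nhds.isBigO_one 𝕜 (c := e - d))
    refine hR.congr' ?_ .rfl
    filter_upwards [eventually_isUnit_sub_smul hb] with z hz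
    dsimp only [T]
    rw [one_sub_inverse_mul_eq e hz hd, add_sub_cancel_left]
  have hTd : Tendsto T (cobounded 𝕜) (𝓝 d) :=
    tendsto_sub_nhds_zero_iff.mp (hT.trans_tendsto tendsto_inv₀_cobounded)
  simpa [hdk] using hT.pow_sub_pow hTd k

end InverseSubSMul

theorem exists_forall_spectralRadius_le_div {𝕜 A : Type*} [NontriviallyNormedField 𝕜]
    [NormedRing A] [NormedAlgebra 𝕜 A] [CompleteSpace A] [NormOneClass A]
    {P : ℝ → Prop} {T : ℝ → A} (hP : ∀ᶠ μ in atTop, P μ) (hT : T =O[atTop] fun μ => μ⁻¹) :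
    ∃ c > (0 : ℝ), ∃ μs > (0 : ℝ), ∀ μ : ℝ, μs < μ →
      P μ ∧ spectralRadius 𝕜 (T μ) ≤ ENNReal.ofReal (c / μ) := by
  obtain ⟨c, hc, hcT⟩ := hT.exists_pos
  obtain ⟨μ₀, hμ₀⟩ := eventually_atTop.mp (hP.and (hcT.bound.and (eventually_gt_atTop 0)))
  refine ⟨c, hc, max μ₀ 1, by positivity, fun μ hμ => ?_⟩
  obtain ⟨hPμ, hTμ, hμ⟩ := hμ₀ μ (le_of_max_le_left hμ.le)
  refine ⟨hPμ, ((spectrum.spectralRadius_le_nnnorm (T μ)).trans_eq (ofReal_norm _).symm).trans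
    (ENNReal.ofReal_le_ofReal (hTμ.trans_eq ?_))⟩
  rw [norm_inv, Real.norm_of_nonneg hμ.le, div_eq_mul_inv]

theorem Matrix.kronecker_pow {R m n : Type*} [CommSemiring R] [Fintype m] [DecidableEq m]
    [Fintype n] [DecidableEq n] (X : Matrix m m R) (Y : Matrix n n R) (p : ℕ) :
    (X ⊗ₖ Y) ^ p = (X ^ p) ⊗ₖ (Y ^ p) := by
  induction p with
  | zero => simp
  | succ p ih => rw [pow_succ, pow_succ, pow_succ, ih, mul_kronecker_mul]

attribute [local instance] Matrix.linftyOpNormedAddCommGroup Matrix.linftyOpNormedRing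
  Matrix.linftyOpNormedAlgebra

section LinftyOpNorm

variable {α 𝕜 F : Type*} [NontriviallyNormedField 𝕜] [CompleteSpace 𝕜] [Norm F]
  {m n : Type*} [Fintype m] [Fintype n]

theorem Asymptotics.IsBigO.matrix_const_mul_mul_const {K m' n' : Type*} [NormedRing K]
    [Fintype m'] [Fintype n'] {l : Filter α} {g : α → F} {f : α → Matrix m' n' K}
    (h : f =O[l] g) (s : Matrix m m' K) (r : Matrix n' n K) : (fun x => s * f x * r) =O[l] g :=
  IsBigO.trans (isBigO_of_le' (c := ‖s‖ * ‖r‖) l fun x =>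
    (linfty_opNorm_mul _ _).trans <| (mul_le_mul_of_nonneg_right (linfty_opNorm_mul _ _)
      (norm_nonneg r)).trans_eq (by ring)) h

theorem isBigO_one_sub_mul_inverse_mul [DecidableEq m] [DecidableEq n] {b : Matrix m m 𝕜}
    (hb : IsUnit b) (a : Matrix m m 𝕜) (s : Matrix n m 𝕜) (r : Matrix m n 𝕜)
    (c x : Matrix n n 𝕜) :
    (fun z : 𝕜 => 1 - s * Ring.inverse (a - z • b) * r * (c - z • x))
      =O[cobounded 𝕜] (fun _ => (1 : 𝕜)) := by
  have hinv : (fun z : 𝕜 => s * Ring.inverse (a - z • b) * r) =O[cobounded 𝕜] Inv.inv :=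
    -- instance search misses completeness for the uniformity of `linftyOpNormedRing`
    (@isBigO_inverse_sub_smul _ _ _ _ _ (FiniteDimensional.complete 𝕜 _) a b
      hb).matrix_const_mul_mul_const s r
  have hlin : (fun z : 𝕜 => c - z • x) =O[cobounded 𝕜] id := isBigO_sub_smul c x
  have hinv_mul : (fun z : 𝕜 => z⁻¹ * id z) =O[cobounded 𝕜] (fun _ => (1 : 𝕜)) :=
    isBigO_of_le' (c := 1) _ fun z => by
      rcases eq_or_ne z 0 with rfl | hz <;> simp [*]
  exact (isBigO_const_const _ one_ne_zero _).sub ((hinv.mul hlin).trans hinv_mul)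

end LinftyOpNorm

section PFASST

variable {L M N M' N' : ℕ}

lemma cmplx_eq_mapMatrix {m : Type*} [Fintype m] [DecidableEq m] (P : Matrix m m ℝ) :
    cmplx P = Complex.ofRealHom.mapMatrix P := rfl

lemma isUnit_one_kronecker_cmplx_kronecker {P : Matrix (Fin M) (Fin M) ℝ}
    {A : Matrix (Fin N) (Fin N) ℂ} (hP : IsUnit P) (hA : IsUnit A) :
    IsUnit ((1 : Matrix (Fin L) (Fin L) ℂ) ⊗ₖ (cmplx P ⊗ₖ A)) :=
  isUnit_one.kronecker ((hP.map Complex.ofRealHom.mapMatrix).kronecker hA)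

theorem eventually_isUnit_Phat {QΔ : Matrix (Fin M) (Fin M) ℝ} {A : Matrix (Fin N) (Fin N) ℂ}
    (hQΔ : IsUnit QΔ) (hA : IsUnit A) : ∀ᶠ μ in atTop, IsUnit (Phat L QΔ A μ) :=
  (RCLike.tendsto_ofReal_atTop_cobounded ℂ).eventually
    (eventually_isUnit_sub_smul (isUnit_one_kronecker_cmplx_kronecker hQΔ hA))

theorem eventually_isUnit_Ptilde {QΔt : Matrix (Fin M') (Fin M') ℝ}
    {At : Matrix (Fin N') (Fin N') ℂ} (hQΔt : IsUnit QΔt) (hAt : IsUnit At) :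
    ∀ᶠ μ in atTop, IsUnit (Ptilde L QΔt At μ) := by
  simp only [Ptilde, sub_right_comm _ _ (EH L M' N')]
  exact (RCLike.tendsto_ofReal_atTop_cobounded ℂ).eventually
    (eventually_isUnit_sub_smul (isUnit_one_kronecker_cmplx_kronecker hQΔt hAt))
theorem isBigO_Tsmooth_pow {Q QΔ : Matrix (Fin M) (Fin M) ℝ} {A : Matrix (Fin N) (Fin N) ℂ}
    (hQΔ : IsUnit QΔ) (hA : IsUnit A) (hnil : (1 - QΔ⁻¹ * Q) ^ M = 0) {k : ℕ} (hk : M ≤ k) :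
    (fun μ : ℝ => Tsmooth L Q QΔ A μ ^ k) =O[atTop] fun μ => (μ : ℂ)⁻¹ := by
  set D : Matrix (Fin L × Fin M × Fin N) (Fin L × Fin M × Fin N) ℂ :=
    1 ⊗ₖ (cmplx (1 - QΔ⁻¹ * Q) ⊗ₖ 1)
  have hD : (1 ⊗ₖ (cmplx QΔ ⊗ₖ A)) * D = 1 ⊗ₖ (cmplx QΔ ⊗ₖ A) - 1 ⊗ₖ (cmplx Q ⊗ₖ A) := by
    have hQ : QΔ * (1 - QΔ⁻¹ * Q) = QΔ - Q := by
      rw [mul_sub, mul_one, mul_nonsing_inv_cancel_left _ _ ((isUnit_iff_isUnit_det _).mp hQΔ)]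
    refine eq_sub_of_add_eq ?_
    simp only [D, ← mul_kronecker_mul, mul_one, cmplx_eq_mapMatrix, ← map_mul, hQ,
      ← kronecker_add, ← add_kronecker, ← map_add, sub_add_cancel]
  have hDk : D ^ k = 0 := by
    simp only [D, kronecker_pow, cmplx_eq_mapMatrix, ← map_pow, pow_eq_zero_of_le hk hnil,
      map_zero, zero_kronecker, kronecker_zero]
  simp only [Tsmooth, Phat, Cmat, nonsing_inv_eq_ringInverse]
  exact (isBigO_pow_one_sub_inverse_mul (EH L M N)
    (isUnit_one_kronecker_cmplx_kronecker hQΔ hA) hD hDk).comp_tendsto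
      (RCLike.tendsto_ofReal_atTop_cobounded ℂ)

theorem isBigO_Tcgc (Q : Matrix (Fin M) (Fin M) ℝ) (A : Matrix (Fin N) (Fin N) ℂ)
    {QΔt : Matrix (Fin M') (Fin M') ℝ} {At : Matrix (Fin N') (Fin N') ℂ}
    (TFQ : Matrix (Fin M') (Fin M) ℝ) (TFA : Matrix (Fin N') (Fin N) ℂ)
    (TCQ : Matrix (Fin M) (Fin M') ℝ) (TCA : Matrix (Fin N) (Fin N') ℂ)
    (hQΔt : IsUnit QΔt) (hAt : IsUnit At) :
    (fun μ : ℝ => Tcgc L Q A QΔt At TFQ TFA TCQ TCA μ) =O[atTop] fun _ => (1 : ℂ) := by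
  simp only [Tcgc, Ptilde, Cmat, nonsing_inv_eq_ringInverse, sub_right_comm _ _ (EH _ _ _)]
  exact (isBigO_one_sub_mul_inverse_mul (isUnit_one_kronecker_cmplx_kronecker hQΔt hAt) _ _ _ _
    _).comp_tendsto (RCLike.tendsto_ofReal_atTop_cobounded ℂ)

end PFASST

theorem stmt_13_general (L M N M' N' : ℕ) (hL : 0 < L) (hM : 0 < M) (hN : 0 < N)
    (Q QΔ : Matrix (Fin M) (Fin M) ℝ) (A : Matrix (Fin N) (Fin N) ℂ)
    (QΔt : Matrix (Fin M') (Fin M') ℝ) (At : Matrix (Fin N') (Fin N') ℂ)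
    (TFQ : Matrix (Fin M') (Fin M) ℝ) (TFA : Matrix (Fin N') (Fin N) ℂ)
    (TCQ : Matrix (Fin M) (Fin M') ℝ) (TCA : Matrix (Fin N) (Fin N') ℂ)
    (hQΔ : IsUnit QΔ) (hA : IsUnit A) (hQΔt : IsUnit QΔt) (hAt : IsUnit At)
    (hnil : ((1 : Matrix (Fin M) (Fin M) ℝ) - QΔ⁻¹ * Q) ^ M = 0)
    (k : ℕ) (hk : M ≤ k) :
    ∃ c > (0 : ℝ), ∃ μs > (0 : ℝ), ∀ μ : ℝ, μs < μ →
      IsUnit (Phat L QΔ A μ) ∧ IsUnit (Ptilde L QΔt At μ) ∧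
      spectralRadius ℂ
          ((Tsmooth L Q QΔ A μ) ^ k * Tcgc L Q A QΔt At TFQ TFA TCQ TCA μ) ≤
        ENNReal.ofReal (c / μ) := by
  -- gives `NormOneClass` for the ∞-operator norm on the fine space
  have : Nonempty (Fin L × Fin M × Fin N) := ⟨(⟨0, hL⟩, ⟨0, hM⟩, ⟨0, hN⟩)⟩
  have hT : (fun μ : ℝ => Tsmooth L Q QΔ A μ ^ k * Tcgc L Q A QΔt At TFQ TFA TCQ TCA μ)
      =O[atTop] fun μ => μ⁻¹ := by
    refine ((isBigO_Tsmooth_pow hQΔ hA hnil hk).mul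
      (isBigO_Tcgc Q A TFQ TFA TCQ TCA hQΔt hAt)).trans (isBigO_of_le' (c := 1) _ fun μ => ?_)
    simp
  obtain ⟨c, hc, μs, hμs, h⟩ := exists_forall_spectralRadius_le_div (𝕜 := ℂ)
    ((eventually_isUnit_Phat hQΔ hA).and (eventually_isUnit_Ptilde hQΔt hAt)) hT
  exact ⟨c, hc, μs, hμs, fun μ hμ => and_assoc.mp (h μ hμ)⟩

theorem stmt_13 (L M N M' N' : ℕ) (hL : 0 < L) (hM : 0 < M) (hN : 0 < N)
    (hM' : 0 < M') (hN' : 0 < N')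
    (Q QΔ : Matrix (Fin M) (Fin M) ℝ) (A : Matrix (Fin N) (Fin N) ℂ)
    (QΔt : Matrix (Fin M') (Fin M') ℝ) (At : Matrix (Fin N') (Fin N') ℂ)
    (TFQ : Matrix (Fin M') (Fin M) ℝ) (TFA : Matrix (Fin N') (Fin N) ℂ)
    (TCQ : Matrix (Fin M) (Fin M') ℝ) (TCA : Matrix (Fin N) (Fin N') ℂ)
    (hQΔ : IsUnit QΔ) (hA : IsUnit A) (hQΔt : IsUnit QΔt) (hAt : IsUnit At)
    (hnil : ((1 : Matrix (Fin M) (Fin M) ℝ) - QΔ⁻¹ * Q) ^ M = 0)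
    (k : ℕ) (hk : M ≤ k) :
    ∃ c > (0 : ℝ), ∃ μs > (0 : ℝ), ∀ μ : ℝ, μs < μ →
      IsUnit (Phat L QΔ A μ) ∧ IsUnit (Ptilde L QΔt At μ) ∧
      spectralRadius ℂ
          ((Tsmooth L Q QΔ A μ) ^ k * Tcgc L Q A QΔt At TFQ TFA TCQ TCA μ) ≤
        ENNReal.ofReal (c / μ) :=
  stmt_13_general L M N M' N' hL hM hN Q QΔ A QΔt At TFQ TFA TCQ TCA hQΔ hA hQΔt hAt hnil k hk
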